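/- arXiv:2203.00103 — 7 statements merged into one kernel-verified Lean document; each statement's English description precedes it below -/
import Mathlib

section
/- For all integers p₁, p₂, all binary vectors x₁, x₂ : Fin n → ℤ (every entry 0 or 1) and all z₁, z₂ : Fin n → ℤ, the matrix identity XP_N(p₁|x₁|z₁) * XP_N(p₂|x₂|z₂) = XP_N(p₁+p₂ | x₁+x₂ | z₁+z₂) * D_N(2 • (x₂ * z₁)) holds, where vector sums and the product x₂ * z₁ are taken componentwise in ℤ. -/
open Matrix

/-- `ω = exp(πi/N)`. -/
noncomputable def omN (N : ℕ) : ℂ := Complex.exp (Real.pi * Complex.I / N)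

/-- The Pauli X matrix. -/
def Xm : Matrix (Fin 2) (Fin 2) ℂ := !![0, 1; 1, 0]

/-- The precision-`N` phase matrix `P = diag(1, ω²)`. -/
noncomputable def Pm (N : ℕ) : Matrix (Fin 2) (Fin 2) ℂ := !![1, 0; 0, (omN N) ^ 2]

/-- The precision-`N` XP operator `XP_N(p|x|z)` on `n` qubits, the matrix indexed by bit
strings whose `(f, e)` entry is `ω^p * ∏ i, (X^(x i) * P^(z i)) (f i) (e i)`. -/
noncomputable def XP (N n : ℕ) (p : ℤ) (x z : Fin n → ℤ) :
    Matrix (Fin n → Fin 2) (Fin n → Fin 2) ℂ :=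
  Matrix.of fun f e => (omN N) ^ p * ∏ i, ((Xm ^ (x i)) * (Pm N) ^ (z i)) (f i) (e i)

/-- The antisymmetric operator `D_N(z) = XP_N(∑ i, z i | 0 | -z)`. -/
noncomputable def DN (N n : ℕ) (z : Fin n → ℤ) :
    Matrix (Fin n → Fin 2) (Fin n → Fin 2) ℂ :=
  XP N n (∑ i, z i) 0 (-z)

/-- A vector is binary if every entry is 0 or 1. -/
def IsBinary {n : ℕ} (x : Fin n → ℤ) : Prop := ∀ i, x i = 0 ∨ x i = 1

/-!
`XP_N(p|x|z)` is `ω^p` times the Kronecker product of the one-qubit factors `X^(x i) * P^(z i)`,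
and Kronecker products multiply factorwise. On one qubit `P` is diagonal, so `P^b X = ω^(2b) X P^(-b)`;
hence for a binary `c`, `X^a P^b X^c P^d = ω^(2cb) X^(a+c) P^(b+d) P^(-2cb)`. Collecting the phases
`ω^(2cb)` over all qubits together with the factors `P^(-2cb)` gives exactly `D_N(2 x₂ z₁)`.
-/

section PiKronecker

variable {ι α β γ R : Type*} [Fintype ι] [CommSemiring R]

def piKronecker (M : ι → Matrix α β R) : Matrix (ι → α) (ι → β) R :=
  Matrix.of fun f e => ∏ i, M i (f i) (e i)

theorem piKronecker_mul [DecidableEq ι] [Fintype β] (M₁ : ι → Matrix α β R)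
    (M₂ : ι → Matrix β γ R) :
    piKronecker M₁ * piKronecker M₂ = piKronecker fun i => M₁ i * M₂ i := by
  ext f e
  simp only [piKronecker, Matrix.mul_apply, Matrix.of_apply, Fintype.prod_sum,
    Finset.prod_mul_distrib]

theorem piKronecker_smul (s : ι → R) (M : ι → Matrix α β R) :
    piKronecker (fun i => s i • M i) = (∏ i, s i) • piKronecker M := by
  ext f e
  simp only [piKronecker, Matrix.of_apply, Matrix.smul_apply, smul_eq_mul,
    Finset.prod_mul_distrib]

end PiKronecker

theorem Finset.prod_zpow_eq_zpow_sum₀ {ι G₀ : Type*} [CommGroupWithZero G₀] {a : G₀} (ha : a ≠ 0)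
    (s : Finset ι) (f : ι → ℤ) : ∏ i ∈ s, a ^ f i = a ^ ∑ i ∈ s, f i := by
  classical
  induction s using Finset.induction_on with
  | empty => simp
  | insert j s hj ih => rw [prod_insert hj, sum_insert hj, ih, zpow_add₀ ha]

theorem Matrix.diagonal_zpow {n K : Type*} [Fintype n] [DecidableEq n] [Field K] {v : n → K}
    (hv : ∀ i, v i ≠ 0) (k : ℤ) : diagonal v ^ k = diagonal fun i => v i ^ k := by
  cases k with
  | ofNat m => simp only [Int.ofNat_eq_natCast, zpow_natCast, diagonal_pow]; rfl
  | negSucc m =>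
    rw [zpow_negSucc, diagonal_pow]
    refine inv_eq_left_inv ?_
    rw [diagonal_mul_diagonal, ← diagonal_one]
    congr 1
    ext i
    simp [zpow_negSucc, hv i]

lemma omN_ne_zero (N : ℕ) : omN N ≠ 0 := Complex.exp_ne_zero _

lemma isUnit_det_Xm : IsUnit Xm.det := by
  simp [Xm, Matrix.det_fin_two_of]

lemma isUnit_det_Pm (N : ℕ) : IsUnit (Pm N).det := by
  simp [Pm, Matrix.det_fin_two_of, omN_ne_zero]

lemma Pm_zpow (N : ℕ) (b : ℤ) : Pm N ^ b = !![1, 0; 0, omN N ^ (2 * b)] := by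
  have hv : ∀ i, ![1, omN N ^ 2] i ≠ 0 := by
    intro i; fin_cases i <;> simp [omN_ne_zero]
  rw [Pm, ← diagonal_vec2, diagonal_zpow hv, ← diagonal_vec2]
  congr 1
  ext i
  fin_cases i <;> simp [_root_.zpow_mul]

lemma Pm_zpow_mul_Xm (N : ℕ) (b : ℤ) :
    Pm N ^ b * Xm = omN N ^ (2 * b) • (Xm * Pm N ^ (-b)) := by
  rw [Pm_zpow, Pm_zpow, Xm]
  ext i j
  fin_cases i <;> fin_cases j <;> simp [mul_inv_cancel₀ (zpow_ne_zero _ (omN_ne_zero N))]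

lemma Xm_zpow_mul_Pm_zpow_mul (N : ℕ) (a b c d : ℤ) (hc : c = 0 ∨ c = 1) :
    Xm ^ a * Pm N ^ b * (Xm ^ c * Pm N ^ d) =
      omN N ^ (2 * (c * b)) • (Xm ^ (a + c) * Pm N ^ (b + d) * Pm N ^ (-(2 * (c * b)))) := by
  have hP := isUnit_det_Pm N
  rcases hc with rfl | rfl
  · simp only [zpow_zero, one_mul, mul_one, zero_mul, mul_zero, neg_zero, one_smul, add_zero,
      Matrix.zpow_add hP, mul_assoc]
  · calc Xm ^ a * Pm N ^ b * (Xm ^ (1 : ℤ) * Pm N ^ d)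
        = Xm ^ a * (Pm N ^ b * Xm) * Pm N ^ d := by rw [zpow_one]; simp only [mul_assoc]
      _ = omN N ^ (2 * b) • (Xm ^ a * Xm * (Pm N ^ (-b) * Pm N ^ d)) := by
        rw [Pm_zpow_mul_Xm, Matrix.mul_smul, Matrix.smul_mul]; noncomm_ring
      _ = _ := by
        rw [← Matrix.zpow_add_one isUnit_det_Xm, ← Matrix.zpow_add hP, mul_assoc,
          ← Matrix.zpow_add hP, one_mul]
        ring_nf

lemma XP_eq_smul_piKronecker (N n : ℕ) (p : ℤ) (x z : Fin n → ℤ) :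
    XP N n p x z = omN N ^ p • piKronecker fun i => Xm ^ x i * Pm N ^ z i :=
  rfl

lemma DN_eq_smul_piKronecker (N n : ℕ) (z : Fin n → ℤ) :
    DN N n z = omN N ^ (∑ i, z i) • piKronecker fun i => Pm N ^ (-z i) := by
  simp [DN, XP_eq_smul_piKronecker]

theorem XP_mul_general (N n : ℕ) (p₁ p₂ : ℤ) (x₁ x₂ z₁ z₂ : Fin n → ℤ)
    (hx₂ : IsBinary x₂) :
    XP N n p₁ x₁ z₁ * XP N n p₂ x₂ z₂ =
      XP N n (p₁ + p₂) (x₁ + x₂) (z₁ + z₂) * DN N n (2 • (x₂ * z₁)) := by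
  have hqubit := funext fun i =>
    Xm_zpow_mul_Pm_zpow_mul N (x₁ i) (z₁ i) (x₂ i) (z₂ i) (hx₂ i)
  simp only [XP_eq_smul_piKronecker, DN_eq_smul_piKronecker, smul_mul_smul_comm,
    piKronecker_mul, hqubit, piKronecker_smul, smul_smul,
    Finset.prod_zpow_eq_zpow_sum₀ (omN_ne_zero N), zpow_add₀ (omN_ne_zero N)]
  simp only [Pi.add_apply, Pi.smul_apply, Pi.mul_apply, nsmul_eq_mul, Nat.cast_ofNat]

/-- **Multiplication rule for XP operators** (MUL):
`XP_N(p₁|x₁|z₁) ⬝ XP_N(p₂|x₂|z₂) = XP_N(p₁+p₂|x₁+x₂|z₁+z₂) ⬝ D_N(2 x₂ z₁)`. -/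
theorem XP_mul (N n : ℕ) (hN : 2 ≤ N) (hn : 1 ≤ n) (p₁ p₂ : ℤ) (x₁ x₂ z₁ z₂ : Fin n → ℤ)
    (hx₁ : IsBinary x₁) (hx₂ : IsBinary x₂) :
    XP N n p₁ x₁ z₁ * XP N n p₂ x₂ z₂ =
      XP N n (p₁ + p₂) (x₁ + x₂) (z₁ + z₂) * DN N n (2 • (x₂ * z₁)) :=
  XP_mul_general N n p₁ p₂ x₁ x₂ z₁ z₂ hx₂
end

section
/- Let A = XP_N(p|0|z) be a diagonal XP operator and set d = lcm over i < n of N / gcd(N, z i) (gcd of the natural number N with the integer z i). Then A^d = ω^(d*p) • (1 : Matrix), and d is the least positive integer m such that A^m is a scalar multiple of the identity matrix. -/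
open Matrix

lemma omN_sq (N : ℕ) : omN N ^ 2 = Complex.exp (2 * Real.pi * Complex.I / N) := by
  rw [omN, ← Complex.exp_nat_mul]
  ring_nf

lemma omN_sq_ne_zero (N : ℕ) : omN N ^ 2 ≠ 0 := pow_ne_zero _ (omN_ne_zero N)

lemma omN_prim (N : ℕ) (hN : N ≠ 0) : IsPrimitiveRoot (omN N ^ 2) N := by
  rw [omN_sq]
  exact Complex.isPrimitiveRoot_exp N hN

lemma Pm_diag (N : ℕ) : Pm N = Matrix.diagonal ![1, (omN N) ^ 2] := by
  ext i j
  fin_cases i <;> fin_cases j <;> simp [Pm, Matrix.diagonal]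

lemma diag_pow_vec (N : ℕ) (m : ℕ) : (![1, omN N ^ 2] ^ m) = ![1, (omN N ^ 2) ^ m] := by
  funext i; fin_cases i <;> simp

lemma Pm_zpow_s4 (N : ℕ) (k : ℤ) :
    (Pm N) ^ k = Matrix.diagonal ![1, ((omN N) ^ 2) ^ k] := by
  rw [Pm_diag]
  obtain ⟨m, rfl | rfl⟩ := k.eq_nat_or_neg
  · rw [zpow_natCast, zpow_natCast, Matrix.diagonal_pow, diag_pow_vec]
  · have hdet : IsUnit (Matrix.diagonal ![1, omN N ^ 2]).det := by
      simp [Matrix.det_diagonal, isUnit_iff_ne_zero, omN_ne_zero N]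
    rw [Matrix.zpow_neg hdet, _root_.zpow_neg, zpow_natCast, zpow_natCast,
      Matrix.diagonal_pow, diag_pow_vec]
    apply Matrix.inv_eq_right_inv
    rw [Matrix.diagonal_mul_diagonal]
    have hv : (fun i => ![(1:ℂ), (omN N ^ 2) ^ m] i * ![(1:ℂ), ((omN N ^ 2) ^ m)⁻¹] i)
        = fun _ => (1:ℂ) := by
      funext i
      fin_cases i <;> simp [mul_inv_cancel₀ (pow_ne_zero m (omN_sq_ne_zero N))]
    rw [hv, Matrix.diagonal_one]

lemma prod_zpow_sum {ι : Type*} (s : Finset ι) (a : ℂ) (ha : a ≠ 0) (g : ι → ℤ) :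
    ∏ i ∈ s, a ^ g i = a ^ (∑ i ∈ s, g i) := by
  classical
  induction s using Finset.cons_induction with
  | empty => simp
  | cons i s hi ih => rw [Finset.prod_cons, Finset.sum_cons, ih, ← zpow_add₀ ha]

/-- The diagonal form of a diagonal XP operator. -/
lemma XP_diag_form (N n : ℕ) (p : ℤ) (z : Fin n → ℤ) :
    XP N n p 0 z = Matrix.diagonal
      (fun f => omN N ^ p * ((omN N) ^ 2) ^ (∑ i, ((f i : ℕ) : ℤ) * z i)) := by
  ext f e
  simp only [XP, Matrix.of_apply, Pi.zero_apply, zpow_zero, one_mul]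
  by_cases hfe : f = e
  · subst hfe
    rw [Matrix.diagonal_apply_eq]
    congr 1
    rw [← prod_zpow_sum Finset.univ _ (omN_sq_ne_zero N)]
    apply Finset.prod_congr rfl
    intro i _
    rw [Pm_zpow_s4, Matrix.diagonal_apply_eq]
    generalize f i = a
    fin_cases a <;> simp
  · rw [Matrix.diagonal_apply_ne _ hfe]
    obtain ⟨i, hi⟩ := Function.ne_iff.mp hfe
    have h0 : ((Pm N) ^ z i) (f i) (e i) = 0 := by
      rw [Pm_zpow_s4, Matrix.diagonal_apply_ne _ hi]
    rw [Finset.prod_eq_zero (Finset.mem_univ i) h0, mul_zero]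

lemma nat_dvd_mul_iff (a b m : ℕ) (ha : 0 < a) :
    a ∣ m * b ↔ a / Nat.gcd a b ∣ m := by
  set g := Nat.gcd a b with hg
  have hgpos : 0 < g := Nat.gcd_pos_of_pos_left b ha
  have h1 : g * (a / g) = a := Nat.mul_div_cancel' (Nat.gcd_dvd_left a b)
  have h2 : g * (b / g) = b := Nat.mul_div_cancel' (Nat.gcd_dvd_right a b)
  have hco : Nat.Coprime (a / g) (b / g) := Nat.coprime_div_gcd_div_gcd hgpos
  have hmb : g * (m * (b / g)) = m * b := by
    calc g * (m * (b / g)) = m * (g * (b / g)) := by ring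
    _ = m * b := by rw [h2]
  rw [← hmb]
  nth_rewrite 1 [← h1]
  rw [Nat.mul_dvd_mul_iff_left hgpos]
  exact ⟨fun h => hco.dvd_of_dvd_mul_right h, fun h => h.mul_right _⟩

lemma int_dvd_key (N : ℕ) (hN : 0 < N) (m : ℕ) (zi : ℤ) :
    (N : ℤ) ∣ (m : ℤ) * zi ↔ (N / Int.gcd (N : ℤ) zi) ∣ m := by
  have h1 : ((N : ℤ) ∣ (m : ℤ) * zi) ↔ N ∣ m * zi.natAbs := by
    rw [← Int.natAbs_dvd_natAbs, Int.natAbs_mul]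
    simp
  have h2 : Int.gcd (N : ℤ) zi = Nat.gcd N zi.natAbs := by
    simp [Int.gcd]
  rw [h1, h2]
  exact nat_dvd_mul_iff N zi.natAbs m hN

/-- **Degree of a diagonal XP operator**: for `A = XP_N(p|0|z)` and
`d = lcm_i (N / gcd(N, z i))`, we have `A^d = ω^(d p) • 1`, and `d` is the least positive
integer `m` such that `A^m` is a scalar multiple of the identity. -/
theorem XP_diag_degree (N n : ℕ) (hN : 2 ≤ N) (hn : 1 ≤ n) (p : ℤ) (z : Fin n → ℤ)
    (d : ℕ) (hd : d = Finset.univ.lcm fun i => N / Int.gcd (N : ℤ) (z i)) :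
    (XP N n p 0 z) ^ d =
        (omN N) ^ ((d : ℤ) * p) • (1 : Matrix (Fin n → Fin 2) (Fin n → Fin 2) ℂ) ∧
      IsLeast {m : ℕ | 0 < m ∧ ∃ c : ℂ,
        (XP N n p 0 z) ^ m = c • (1 : Matrix (Fin n → Fin 2) (Fin n → Fin 2) ℂ)} d := by
  have hN0 : 0 < N := lt_of_lt_of_le two_pos hN
  set ζ := (omN N) ^ 2 with hζdef
  have hζ : IsPrimitiveRoot ζ N := omN_prim N hN0.ne'
  set c : (Fin n → Fin 2) → ℤ := fun f => ∑ i, ((f i : ℕ) : ℤ) * z i with hc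
  -- the powers of A
  have hpow : ∀ m : ℕ, (XP N n p 0 z) ^ m =
      Matrix.diagonal (fun f => omN N ^ ((m : ℤ) * p) * ζ ^ ((m : ℤ) * c f)) := by
    intro m
    rw [XP_diag_form, Matrix.diagonal_pow]
    apply congrArg Matrix.diagonal
    funext f
    show (omN N ^ p * ζ ^ c f) ^ m = omN N ^ ((m : ℤ) * p) * ζ ^ ((m : ℤ) * c f)
    rw [mul_pow, ← zpow_natCast (omN N ^ p) m, ← zpow_natCast (ζ ^ c f) m,
      ← _root_.zpow_mul, ← _root_.zpow_mul, mul_comm p (m : ℤ), mul_comm (c f) (m : ℤ)]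
  -- the indicator vectors realize each `z i`
  have hind : ∀ i : Fin n, ∃ f : Fin n → Fin 2, c f = z i := by
    intro i
    refine ⟨fun j => if j = i then 1 else 0, ?_⟩
    show (∑ j, ((((if j = i then (1 : Fin 2) else 0) : Fin 2) : ℕ) : ℤ) * z j) = z i
    simp [apply_ite, Finset.sum_ite_eq']
  have hzero : c (fun _ => 0) = 0 := by
    show (∑ i : Fin n, (((0 : Fin 2) : ℕ) : ℤ) * z i) = 0
    simp
  -- membership characterization
  have hmem : ∀ m : ℕ, (∃ cc : ℂ, (XP N n p 0 z) ^ m =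
      cc • (1 : Matrix (Fin n → Fin 2) (Fin n → Fin 2) ℂ)) ↔
      ∀ i : Fin n, (N / Int.gcd (N : ℤ) (z i)) ∣ m := by
    intro m
    constructor
    · rintro ⟨cc, hcc⟩
      rw [hpow m, Matrix.smul_one_eq_diagonal] at hcc
      have heq := congrFun (Matrix.diagonal_injective hcc)
      have hne : omN N ^ ((m : ℤ) * p) ≠ 0 := zpow_ne_zero _ (omN_ne_zero N)
      have hcc0 : cc = omN N ^ ((m : ℤ) * p) := by
        have h0 : omN N ^ ((m : ℤ) * p) * ζ ^ ((m : ℤ) * c (fun _ => 0)) = cc :=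
          heq (fun _ => 0)
        rw [hzero, mul_zero, zpow_zero, mul_one] at h0
        exact h0.symm
      intro i
      obtain ⟨f, hf⟩ := hind i
      have hfe : omN N ^ ((m : ℤ) * p) * ζ ^ ((m : ℤ) * c f) = cc := heq f
      rw [hcc0, hf] at hfe
      have h1 : ζ ^ ((m : ℤ) * z i) = 1 := by
        have h2 : omN N ^ ((m : ℤ) * p) * ζ ^ ((m : ℤ) * z i)
            = omN N ^ ((m : ℤ) * p) * 1 := by rw [mul_one]; exact hfe
        exact mul_left_cancel₀ hne h2
      rw [hζ.zpow_eq_one_iff_dvd] at h1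
      exact (int_dvd_key N hN0 m (z i)).mp h1
    · intro h
      refine ⟨omN N ^ ((m : ℤ) * p), ?_⟩
      rw [hpow m, Matrix.smul_one_eq_diagonal]
      apply congrArg Matrix.diagonal
      funext f
      show omN N ^ ((m : ℤ) * p) * ζ ^ ((m : ℤ) * c f) = omN N ^ ((m : ℤ) * p)
      have : ζ ^ ((m : ℤ) * c f) = 1 := by
        rw [hζ.zpow_eq_one_iff_dvd]
        have : (m : ℤ) * c f = ∑ i, ((f i : ℕ) : ℤ) * ((m : ℤ) * z i) := by
          rw [hc, Finset.mul_sum]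
          apply Finset.sum_congr rfl
          intro i _
          ring
        rw [this]
        apply Finset.dvd_sum
        intro i _
        exact Dvd.dvd.mul_left ((int_dvd_key N hN0 m (z i)).mpr (h i)) _
      rw [this, mul_one]
  -- positivity of d
  have hdvd_all : ∀ i : Fin n, (N / Int.gcd (N : ℤ) (z i)) ∣ d := by
    intro i
    rw [hd]
    exact Finset.dvd_lcm (Finset.mem_univ i)
  have hterm_pos : ∀ i : Fin n, 0 < N / Int.gcd (N : ℤ) (z i) := by
    intro i
    apply Nat.div_pos _ (Int.gcd_pos_of_ne_zero_left (z i) (by exact_mod_cast hN0.ne'))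
    have : (Int.gcd (N : ℤ) (z i)) ∣ N := by
      have := Int.gcd_dvd_left (a := (N : ℤ)) (b := z i)
      exact_mod_cast this
    exact Nat.le_of_dvd hN0 this
  have hdpos : 0 < d := by
    rcases Nat.eq_zero_or_pos d with h0 | h
    · exfalso
      rw [hd, Finset.lcm_eq_zero_iff] at h0
      obtain ⟨i, -, hi⟩ := h0
      exact (hterm_pos i).ne' hi
    · exact h
  -- conclusion
  have hdmem : ∃ cc : ℂ, (XP N n p 0 z) ^ d =
      cc • (1 : Matrix (Fin n → Fin 2) (Fin n → Fin 2) ℂ) := (hmem d).mpr hdvd_all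
  have hAd : (XP N n p 0 z) ^ d =
      (omN N) ^ ((d : ℤ) * p) • (1 : Matrix (Fin n → Fin 2) (Fin n → Fin 2) ℂ) := by
    obtain ⟨cc, hcc⟩ := hdmem
    -- redo the computation to get the exact constant
    rw [hpow d, Matrix.smul_one_eq_diagonal]
    apply congrArg Matrix.diagonal
    funext f
    show omN N ^ ((d : ℤ) * p) * ζ ^ ((d : ℤ) * c f) = omN N ^ ((d : ℤ) * p)
    have : ζ ^ ((d : ℤ) * c f) = 1 := by
      rw [hζ.zpow_eq_one_iff_dvd]
      have heq : (d : ℤ) * c f = ∑ i, ((f i : ℕ) : ℤ) * ((d : ℤ) * z i) := by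
        rw [hc, Finset.mul_sum]
        apply Finset.sum_congr rfl
        intro i _
        ring
      rw [heq]
      apply Finset.dvd_sum
      intro i _
      exact Dvd.dvd.mul_left ((int_dvd_key N hN0 d (z i)).mpr (hdvd_all i)) _
    rw [this, mul_one]
  refine ⟨hAd, ⟨⟨hdpos, (omN N) ^ ((d : ℤ) * p), hAd⟩, ?_⟩⟩
  rintro m ⟨hm, hcc⟩
  have := (hmem m).mp hcc
  have hdvd : d ∣ m := by
    rw [hd]
    apply Finset.lcm_dvd
    intro i _
    exact this i
  exact Nat.le_of_dvd hm hdvd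
end

section
/- Let A₀, …, A_{r−1} be XP operators of precision N with binary x-components, let S_Z be a set of diagonal XP operators of precision N, and let G be the subgroup of the group of invertible 2^n × 2^n complex matrices generated by {A₀, …, A_{r−1}} ∪ S_Z. Let e : Fin n → Fin 2 be a bit string such that B.mulVec |e⟩ = |e⟩ for every diagonal matrix B ∈ G. Then the orbit state O|e⟩ := ∑ over v : Fin r → Fin 2 of (A₀^(v 0) * A₁^(v 1) * ⋯ * A_{r−1}^(v (r−1))).mulVec |e⟩ (product taken in increasing order of the index) is fixed by every element of G: for all M ∈ G, M.mulVec (O|e⟩) = O|e⟩. -/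
open Matrix

/-! An XP operator is a monomial matrix `|e⟩ ↦ c • |e + t⟩` whose translation `t` is its
X-component mod 2, and translations add under multiplication. Given `g ∈ G` and a bit string `v`,
pick `v'` such that `g · A^v` and `A^{v'}` have the same translation (`v' = v + δ_j` if `g = A_j`,
`v' = v` if `g` is diagonal). Then `(A^{v'})⁻¹ g A^v` is a diagonal element of `G`, so it fixes
`|e⟩`, whence `g A^v |e⟩ = A^{v'} |e⟩`; as `v ↦ v'` is a bijection, `g` permutes the terms of
the orbit sum. -/

namespace Matrix

variable {K 𝕜 : Type*} [AddCommGroup K] [DecidableEq K] [Field 𝕜]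

def shiftMonomial (t : K) (c : K → 𝕜) : Matrix K K 𝕜 :=
  of fun f e => if f = e + t then c e else 0

def IsShiftMonomial (M : Matrix K K 𝕜) (t : K) : Prop :=
  ∃ c : K → 𝕜, (∀ e, c e ≠ 0) ∧ M = shiftMonomial t c

theorem shiftMonomial_zero (c : K → 𝕜) : shiftMonomial 0 c = diagonal c := by
  ext f e
  by_cases h : f = e <;> simp [shiftMonomial, h]

theorem IsShiftMonomial.one : IsShiftMonomial (1 : Matrix K K 𝕜) 0 :=
  ⟨1, fun _ => one_ne_zero, by rw [shiftMonomial_zero]; exact diagonal_one.symm⟩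

theorem IsShiftMonomial.isDiag {M : Matrix K K 𝕜} (hM : IsShiftMonomial M 0) : M.IsDiag := by
  obtain ⟨c, -, rfl⟩ := hM
  rw [shiftMonomial_zero]
  exact isDiag_diagonal c

theorem IsShiftMonomial.of_mul_prod {ι : Type*} [Fintype ι] {Q : ι → Matrix K K 𝕜} {t : ι → K}
    (hQ : ∀ i, IsShiftMonomial (Q i) (t i)) {a : 𝕜} (ha : a ≠ 0) :
    IsShiftMonomial (of fun f e : ι → K => a * ∏ i, Q i (f i) (e i)) t := by
  choose c hc hQc using hQ
  refine ⟨fun e => a * ∏ i, c i (e i), fun e => mul_ne_zero ha (Finset.prod_ne_zero_iff.2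
    fun i _ => hc i _), ?_⟩
  ext f e
  simp [hQc, shiftMonomial, Finset.prod_ite_zero, funext_iff]

variable [Fintype K]

theorem shiftMonomial_mul_shiftMonomial (t t' : K) (c c' : K → 𝕜) :
    shiftMonomial t c * shiftMonomial t' c' =
      shiftMonomial (t + t') (fun e => c (e + t') * c' e) := by
  ext f e
  simp [shiftMonomial, mul_apply, mul_ite, add_assoc, add_comm t']

theorem shiftMonomial_mul_shiftMonomial_neg {c : K → 𝕜} (hc : ∀ e, c e ≠ 0) (t : K) :
    shiftMonomial t c * shiftMonomial (-t) (fun e => (c (e - t))⁻¹) = 1 := by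
  rw [shiftMonomial_mul_shiftMonomial, add_neg_cancel, shiftMonomial_zero, ← diagonal_one]
  congr 1
  ext e
  simp [← sub_eq_add_neg, hc]

namespace IsShiftMonomial

variable {M M' : Matrix K K 𝕜} {t t' : K}

theorem mul (hM : IsShiftMonomial M t) (hM' : IsShiftMonomial M' t') :
    IsShiftMonomial (M * M') (t + t') := by
  obtain ⟨c, hc, rfl⟩ := hM
  obtain ⟨c', hc', rfl⟩ := hM'
  exact ⟨_, fun e => mul_ne_zero (hc _) (hc' e), shiftMonomial_mul_shiftMonomial t t' c c'⟩

theorem pow (hM : IsShiftMonomial M t) (k : ℕ) : IsShiftMonomial (M ^ k) (k • t) := by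
  induction k with
  | zero => simpa using one
  | succ k ih => simpa [pow_succ, succ_nsmul] using ih.mul hM

theorem isUnit (hM : IsShiftMonomial M t) : IsUnit M := by
  obtain ⟨c, hc, rfl⟩ := hM
  exact .of_mul_eq_one _ (shiftMonomial_mul_shiftMonomial_neg hc t)

theorem inv (hM : IsShiftMonomial M t) : IsShiftMonomial M⁻¹ (-t) := by
  obtain ⟨c, hc, rfl⟩ := hM
  exact ⟨_, fun e => inv_ne_zero (hc _),
    inv_eq_right_inv (shiftMonomial_mul_shiftMonomial_neg hc t)⟩

theorem zpow (hM : IsShiftMonomial M t) (z : ℤ) : IsShiftMonomial (M ^ z) (z • t) := by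
  rcases z with k | k
  · simpa using hM.pow k
  · simpa [zpow_negSucc, negSucc_zsmul] using (hM.pow (k + 1)).inv

theorem units_inv {u : (Matrix K K 𝕜)ˣ} (hu : IsShiftMonomial (u : Matrix K K 𝕜) t) :
    IsShiftMonomial (↑u⁻¹ : Matrix K K 𝕜) (-t) := by
  rw [coe_units_inv]
  exact hu.inv

end IsShiftMonomial

end Matrix

theorem isShiftMonomial_Xm : IsShiftMonomial Xm (1 : Fin 2) :=
  ⟨1, fun _ => one_ne_zero, by ext f e; fin_cases f <;> fin_cases e <;> simp [Xm, shiftMonomial]⟩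

theorem isShiftMonomial_Pm (N : ℕ) : IsShiftMonomial (Pm N) (0 : Fin 2) := by
  refine ⟨![1, omN N ^ 2], fun k => ?_, ?_⟩
  · fin_cases k <;> simp [omN, Complex.exp_ne_zero]
  · ext f e
    fin_cases f <;> fin_cases e <;> simp [Pm, shiftMonomial]

theorem isShiftMonomial_XP (N n : ℕ) (p : ℤ) (x z : Fin n → ℤ) :
    IsShiftMonomial (XP N n p x z) (fun i => x i • 1) := by
  refine IsShiftMonomial.of_mul_prod (fun i => ?_) (zpow_ne_zero _ (Complex.exp_ne_zero _))
  simpa using (isShiftMonomial_Xm.zpow (x i)).mul ((isShiftMonomial_Pm N).zpow (z i))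

section Orbit

def orbitProd {M : Type*} [Monoid M] {r : ℕ} (a : Fin r → M) (v : Fin r → Fin 2) : M :=
  (List.ofFn fun i => a i ^ (v i : ℕ)).prod

theorem map_orbitProd {M M' F : Type*} [Monoid M] [Monoid M'] [FunLike F M M']
    [MonoidHomClass F M M'] (f : F) {r : ℕ} (a : Fin r → M) (v : Fin r → Fin 2) :
    f (orbitProd a v) = orbitProd (fun i => f (a i)) v := by
  simp [orbitProd, map_list_prod, List.map_ofFn, Function.comp_def]

theorem orbitProd_mem {M S : Type*} [Monoid M] [SetLike S M] [SubmonoidClass S M] {s : S}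
    {r : ℕ} {a : Fin r → M} (ha : ∀ i, a i ∈ s) (v : Fin r → Fin 2) : orbitProd a v ∈ s :=
  list_prod_mem (by simpa [List.mem_ofFn] using fun i => pow_mem (ha i) _)

theorem sum_add_single_nsmul {K : Type*} [AddCommMonoid K] {r : ℕ} (v : Fin r → Fin 2)
    {t : Fin r → K} {j : Fin r} (hj : t j + t j = 0) :
    ∑ i, ((v + Pi.single j 1 : Fin r → Fin 2) i : ℕ) • t i = t j + ∑ i, (v i : ℕ) • t i := by
  have hterm : ∀ i, ((v + Pi.single j 1 : Fin r → Fin 2) i : ℕ) • t i =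
      (Pi.single j (t j) : Fin r → K) i + (v i : ℕ) • t i := by
    intro i
    rcases eq_or_ne i j with rfl | hij
    · rcases (by omega : v i = 0 ∨ v i = 1) with h | h <;> simp [h, hj]
    · simp [hij]
  rw [Finset.sum_congr rfl fun i _ => hterm i, Finset.sum_add_distrib]
  simp

variable {K 𝕜 : Type*} [AddCommGroup K] [Fintype K] [DecidableEq K] [Field 𝕜]

theorem isShiftMonomial_orbitProd {r : ℕ} {A : Fin r → Matrix K K 𝕜} {t : Fin r → K}
    (hA : ∀ i, IsShiftMonomial (A i) (t i)) (v : Fin r → Fin 2) :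
    IsShiftMonomial (orbitProd A v) (∑ i, (v i : ℕ) • t i) := by
  induction r with
  | zero => simpa [orbitProd] using IsShiftMonomial.one (K := K) (𝕜 := 𝕜)
  | succ r ih =>
    simpa [orbitProd, List.ofFn_succ, Fin.sum_univ_succ] using
      ((hA 0).pow (v 0)).mul (ih (fun i => hA i.succ) (fun i => v i.succ))

def mulVecStabilizer (w : K → 𝕜) : Subgroup (Matrix K K 𝕜)ˣ where
  carrier := {g | (g : Matrix K K 𝕜) *ᵥ w = w}
  one_mem' := one_mulVec w
  mul_mem' {g h} hg hh := by
    simp_all [← mulVec_mulVec]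
  inv_mem' {g} hg := by
    change (g : Matrix K K 𝕜) *ᵥ w = w at hg
    change ((g⁻¹ : (Matrix K K 𝕜)ˣ) : Matrix K K 𝕜) *ᵥ w = w
    conv_lhs => rw [← hg]
    rw [mulVec_mulVec, ← Units.val_mul, inv_mul_cancel, Units.val_one, one_mulVec]

theorem mulVec_mulVec_single_eq_of_isShiftMonomial {G : Subgroup (Matrix K K 𝕜)ˣ} {e : K}
    (hfix : ∀ g ∈ G, (g : Matrix K K 𝕜).IsDiag →
      (g : Matrix K K 𝕜) *ᵥ Pi.single e 1 = Pi.single e 1)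
    {g u u' : (Matrix K K 𝕜)ˣ} (hg : g ∈ G) (hu : u ∈ G) (hu' : u' ∈ G) {t s : K}
    (hgt : IsShiftMonomial (g : Matrix K K 𝕜) t) (hus : IsShiftMonomial (u : Matrix K K 𝕜) s)
    (hu's : IsShiftMonomial (u' : Matrix K K 𝕜) (t + s)) :
    (g : Matrix K K 𝕜) *ᵥ ((u : Matrix K K 𝕜) *ᵥ Pi.single e 1) =
      (u' : Matrix K K 𝕜) *ᵥ Pi.single e 1 := by
  set D := u'⁻¹ * g * u
  have hD : IsShiftMonomial (D : Matrix K K 𝕜) 0 := by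
    simpa [D] using (hu's.units_inv.mul hgt).mul hus
  have hDe := hfix D (mul_mem (mul_mem (inv_mem hu') hg) hu) hD.isDiag
  have hgu : g * u = u' * D := by simp [D, mul_assoc]
  rw [mulVec_mulVec, ← Units.val_mul, hgu, Units.val_mul, ← mulVec_mulVec, hDe]

def orbitState {r : ℕ} (A : Fin r → Matrix K K 𝕜) (e : K) : K → 𝕜 :=
  ∑ v, orbitProd A v *ᵥ Pi.single e 1

theorem closure_le_mulVecStabilizer_orbitState {r : ℕ} {A : Fin r → Matrix K K 𝕜}
    {t : Fin r → K} (hA : ∀ i, IsShiftMonomial (A i) (t i)) (ht : ∀ i, t i + t i = 0)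
    {S : Set (Matrix K K 𝕜)} (hS : ∀ B ∈ S, IsShiftMonomial B 0) {e : K}
    (hfix : ∀ g ∈ Subgroup.closure {g : (Matrix K K 𝕜)ˣ | ↑g ∈ Set.range A ∪ S},
      (g : Matrix K K 𝕜).IsDiag → (g : Matrix K K 𝕜) *ᵥ Pi.single e 1 = Pi.single e 1) :
    Subgroup.closure {g : (Matrix K K 𝕜)ˣ | ↑g ∈ Set.range A ∪ S} ≤
      mulVecStabilizer (orbitState A e) := by
  set G := Subgroup.closure {g : (Matrix K K 𝕜)ˣ | ↑g ∈ Set.range A ∪ S}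
  choose a ha using fun i => (hA i).isUnit
  have haG : ∀ i, a i ∈ G := fun i => Subgroup.subset_closure (Or.inl ⟨i, (ha i).symm⟩)
  have hval : ∀ v, orbitProd A v = ((orbitProd a v : (Matrix K K 𝕜)ˣ) : Matrix K K 𝕜) := by
    intro v
    simpa [ha] using (map_orbitProd (Units.coeHom (Matrix K K 𝕜)) a v).symm
  have hshift : ∀ v, IsShiftMonomial ((orbitProd a v : (Matrix K K 𝕜)ˣ) : Matrix K K 𝕜)
      (∑ i, (v i : ℕ) • t i) := fun v => hval v ▸ isShiftMonomial_orbitProd hA v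
  have exchange : ∀ g ∈ G, ∀ {s}, IsShiftMonomial (g : Matrix K K 𝕜) s → ∀ v v',
      ∑ i, (v' i : ℕ) • t i = s + ∑ i, (v i : ℕ) • t i →
      (g : Matrix K K 𝕜) *ᵥ (orbitProd A v *ᵥ Pi.single e 1) =
        orbitProd A v' *ᵥ Pi.single e 1 := by
    intro g hg s hgs v v' hv'
    rw [hval, hval]
    exact mulVec_mulVec_single_eq_of_isShiftMonomial hfix hg (orbitProd_mem haG v)
      (orbitProd_mem haG v') hgs (hshift v) (hv' ▸ hshift v')
  rw [Subgroup.closure_le]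
  rintro g (⟨j, hj⟩ | hg)
  · refine (mulVec_sum _ _ _).trans (Fintype.sum_equiv (Equiv.addRight (Pi.single j 1)) _ _
      fun v => exchange g (Subgroup.subset_closure (Or.inl ⟨j, hj⟩)) (hj ▸ hA j) v _ ?_)
    exact sum_add_single_nsmul v (ht j)
  · refine (mulVec_sum _ _ _).trans (Finset.sum_congr rfl fun v _ =>
      exchange g (Subgroup.subset_closure (Or.inr hg)) (hS _ hg) v v (zero_add _).symm)

end Orbit

theorem orbit_state_stabilised_general (N n r : ℕ)
    (A : Fin r → Matrix (Fin n → Fin 2) (Fin n → Fin 2) ℂ)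
    (hA : ∀ i, ∃ p : ℤ, ∃ x z : Fin n → ℤ, IsBinary x ∧ A i = XP N n p x z)
    (SZ : Set (Matrix (Fin n → Fin 2) (Fin n → Fin 2) ℂ))
    (hSZ : ∀ B ∈ SZ, ∃ p : ℤ, ∃ z : Fin n → ℤ, B = XP N n p 0 z)
    (G : Subgroup (Matrix (Fin n → Fin 2) (Fin n → Fin 2) ℂ)ˣ)
    (hG : G = Subgroup.closure
      {g : (Matrix (Fin n → Fin 2) (Fin n → Fin 2) ℂ)ˣ | (g : Matrix _ _ ℂ) ∈ Set.range A ∪ SZ})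
    (e : Fin n → Fin 2)
    (he : ∀ g ∈ G, Matrix.IsDiag ((g : (Matrix (Fin n → Fin 2) (Fin n → Fin 2) ℂ)ˣ) :
        Matrix (Fin n → Fin 2) (Fin n → Fin 2) ℂ) →
      ((g : Matrix (Fin n → Fin 2) (Fin n → Fin 2) ℂ)).mulVec (Pi.single e 1) = Pi.single e 1) :
    ∀ g ∈ G,
      ((g : Matrix (Fin n → Fin 2) (Fin n → Fin 2) ℂ)).mulVec
        (∑ v : Fin r → Fin 2,
          ((List.ofFn fun i => A i ^ (v i : ℕ)).prod).mulVec (Pi.single e 1)) =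
      ∑ v : Fin r → Fin 2,
        ((List.ofFn fun i => A i ^ (v i : ℕ)).prod).mulVec (Pi.single e 1) := by
  subst hG
  have hAt : ∀ i, ∃ t, IsShiftMonomial (A i) t := fun i => by
    obtain ⟨p, x, z, -, hAi⟩ := hA i
    exact ⟨_, hAi ▸ isShiftMonomial_XP N n p x z⟩
  choose t ht using hAt
  have hSZ0 : ∀ B ∈ SZ, IsShiftMonomial B 0 := fun B hB => by
    obtain ⟨p, z, rfl⟩ := hSZ B hB
    simpa [Pi.zero_def] using isShiftMonomial_XP N n p 0 z
  exact closure_le_mulVecStabilizer_orbitState ht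
    (fun i => funext fun k => (by decide : ∀ b : Fin 2, b + b = 0) _) hSZ0 he

/-- **Codewords as orbits**: if every diagonal element of the group `G` generated by
non-diagonal XP operators `A₀,…,A_{r−1}` and a set `S_Z` of diagonal XP operators fixes the
basis state `|e⟩`, then the orbit state `O|e⟩ = ∑_v (∏_i A_i^{v i})|e⟩` is fixed by every
element of `G`. -/
theorem orbit_state_stabilised (N n r : ℕ) (hN : 2 ≤ N) (hn : 1 ≤ n)
    (A : Fin r → Matrix (Fin n → Fin 2) (Fin n → Fin 2) ℂ)
    (hA : ∀ i, ∃ p : ℤ, ∃ x z : Fin n → ℤ, IsBinary x ∧ A i = XP N n p x z)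
    (SZ : Set (Matrix (Fin n → Fin 2) (Fin n → Fin 2) ℂ))
    (hSZ : ∀ B ∈ SZ, ∃ p : ℤ, ∃ z : Fin n → ℤ, B = XP N n p 0 z)
    (G : Subgroup (Matrix (Fin n → Fin 2) (Fin n → Fin 2) ℂ)ˣ)
    (hG : G = Subgroup.closure
      {g : (Matrix (Fin n → Fin 2) (Fin n → Fin 2) ℂ)ˣ | (g : Matrix _ _ ℂ) ∈ Set.range A ∪ SZ})
    (e : Fin n → Fin 2)
    (he : ∀ g ∈ G, Matrix.IsDiag ((g : (Matrix (Fin n → Fin 2) (Fin n → Fin 2) ℂ)ˣ) :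
        Matrix (Fin n → Fin 2) (Fin n → Fin 2) ℂ) →
      ((g : Matrix (Fin n → Fin 2) (Fin n → Fin 2) ℂ)).mulVec (Pi.single e 1) = Pi.single e 1) :
    ∀ g ∈ G,
      ((g : Matrix (Fin n → Fin 2) (Fin n → Fin 2) ℂ)).mulVec
        (∑ v : Fin r → Fin 2,
          ((List.ofFn fun i => A i ^ (v i : ℕ)).prod).mulVec (Pi.single e 1)) =
      ∑ v : Fin r → Fin 2,
        ((List.ofFn fun i => A i ^ (v i : ℕ)).prod).mulVec (Pi.single e 1) :=
  orbit_state_stabilised_general N n r A hA SZ hSZ G hG e he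
end

section
/- Let A = XP_N(p|0|z) be a diagonal XP operator. Let K ≥ 1, let E₀, …, E_{K−1} be nonempty pairwise disjoint finite sets of bit strings in Fin n → Fin 2 with union E, let φ_i : (Fin n → Fin 2) → ℤ, and set κ_i = ∑ over e ∈ E_i of ω^(φ_i e) • |e⟩. Let Π be the diagonal matrix whose (e,e) entry is 1 if the (e,e) entry of A equals 1 and is 0 otherwise (the orthogonal projection onto the +1-eigenspace of the diagonal matrix A), and let ρ = (1 / |E|) • ∑ over i < K of the outer product |κ_i⟩⟨κ_i| (the matrix with (f,e) entry κ_i f * star (κ_i e)). Then Matrix.trace (Π * ρ * Π) = (|E⁺| : ℂ) / |E|, where E⁺ = {e ∈ E : A.mulVec |e⟩ = |e⟩}. -/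
open Matrix

lemma Pm_eq_diagonal (N : ℕ) : Pm N = Matrix.diagonal ![1, (omN N)^2] := by
  ext i j
  fin_cases i <;> fin_cases j <;> simp [Pm, Matrix.diagonal]

lemma Pm_zpow_ne (N : ℕ) (m : ℤ) {a b : Fin 2} (h : a ≠ b) : (Pm N ^ m) a b = 0 := by
  rw [Pm_eq_diagonal]
  obtain ⟨k, rfl | rfl⟩ := m.eq_nat_or_neg
  · rw [zpow_natCast, Matrix.diagonal_pow, Matrix.diagonal_apply_ne _ h]
  · rw [Matrix.zpow_neg_natCast, Matrix.diagonal_pow, Matrix.inv_diagonal,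
      Matrix.diagonal_apply_ne _ h]

lemma XP_diag_ne (N n : ℕ) (p : ℤ) (z : Fin n → ℤ) {f e : Fin n → Fin 2} (h : f ≠ e) :
    XP N n p 0 z f e = 0 := by
  obtain ⟨i, hi⟩ := Function.ne_iff.mp h
  rw [XP]
  simp only [Matrix.of_apply, Pi.zero_apply, zpow_zero, one_mul]
  rw [Finset.prod_eq_zero (Finset.mem_univ i) (Pm_zpow_ne N _ hi), mul_zero]

lemma eig_iff (N n : ℕ) (p : ℤ) (z : Fin n → ℤ) (e : Fin n → Fin 2) :
    (XP N n p 0 z).mulVec (Pi.single e 1) = Pi.single e 1 ↔ XP N n p 0 z e e = 1 := by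
  rw [Matrix.mulVec_single]
  constructor
  · intro h
    have := congrFun h e
    simpa using this
  · intro h
    funext f
    rcases eq_or_ne f e with rfl | hfe
    · simpa using h
    · simp [XP_diag_ne N n p z hfe, Pi.single_apply, hfe]

lemma omN_mul_conj (N : ℕ) : omN N * (starRingEnd ℂ) (omN N) = 1 := by
  rw [omN, ← Complex.exp_conj, ← Complex.exp_add]
  rw [show (starRingEnd ℂ) (↑Real.pi * Complex.I / ↑N) = -(↑Real.pi * Complex.I / ↑N) by
    simp [map_div₀, Complex.conj_I]; ring]
  simp

lemma omN_zpow_mul_conj (N : ℕ) (k : ℤ) : omN N ^ k * (starRingEnd ℂ) (omN N ^ k) = 1 := by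
  rw [map_zpow₀, ← mul_zpow, omN_mul_conj, _root_.one_zpow]

lemma kappa_apply (N n : ℕ) (s : Finset (Fin n → Fin 2)) (φ : (Fin n → Fin 2) → ℤ)
    (g : Fin n → Fin 2) :
    (∑ e ∈ s, (omN N) ^ (φ e) • (Pi.single e 1 : (Fin n → Fin 2) → ℂ)) g =
      if g ∈ s then (omN N) ^ (φ g) else 0 := by
  classical
  simp only [Finset.sum_apply, Pi.smul_apply, Pi.single_apply, smul_eq_mul, mul_ite,
    mul_one, mul_zero]
  exact Finset.sum_ite_eq s g _


open scoped Classical in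
/-- **Outcome probability when measuring a diagonal XP operator**: for a diagonal XP operator
`A = XP_N(p|0|z)`, codewords `κ_i = ∑_{e ∈ E_i} ω^(φ_i e) |e⟩` over nonempty pairwise disjoint
supports with union `E`, the projector `Π` onto the +1-eigenspace of `A` and the density matrix
`ρ = (1/|E|) ∑_i |κ_i⟩⟨κ_i|`, we have `Tr(Π ρ Π) = |E⁺| / |E|` where
`E⁺ = {e ∈ E : A|e⟩ = |e⟩}`. -/
theorem diag_measurement_probability (N n : ℕ) (hN : 2 ≤ N) (hn : 1 ≤ n)
    (p : ℤ) (z : Fin n → ℤ) (K : ℕ) (hK : 1 ≤ K)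
    (E : Fin K → Finset (Fin n → Fin 2))
    (hne : ∀ i, (E i).Nonempty)
    (hdisj : ∀ i j, i ≠ j → Disjoint (E i) (E j))
    (φ : Fin K → (Fin n → Fin 2) → ℤ) :
    Matrix.trace
        ((Matrix.diagonal fun e => if XP N n p 0 z e e = 1 then (1 : ℂ) else 0) *
          ((1 / ((Finset.univ.biUnion E).card : ℂ)) •
            ∑ i : Fin K, Matrix.vecMulVec
              (∑ e ∈ E i, (omN N) ^ (φ i e) • (Pi.single e 1 : (Fin n → Fin 2) → ℂ))
              (star (∑ e ∈ E i, (omN N) ^ (φ i e) • (Pi.single e 1 : (Fin n → Fin 2) → ℂ)))) *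
          (Matrix.diagonal fun e => if XP N n p 0 z e e = 1 then (1 : ℂ) else 0)) =
      ({e : Fin n → Fin 2 | e ∈ Finset.univ.biUnion E ∧
          (XP N n p 0 z).mulVec (Pi.single e 1) = Pi.single e 1}.ncard : ℂ) /
        (((Finset.univ.biUnion E).card : ℂ)) := by
  classical
  set B := Finset.univ.biUnion E with hB
  set c : ℂ := (B.card : ℂ) with hc
  -- rewrite RHS set as a finset
  have hset : {e : Fin n → Fin 2 | e ∈ B ∧
      (XP N n p 0 z).mulVec (Pi.single e 1) = Pi.single e 1} =
      ↑(B.filter fun e => XP N n p 0 z e e = 1) := by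
    ext e
    simp only [Set.mem_setOf_eq, Finset.coe_filter, Finset.mem_filter]
    exact and_congr_right fun _ => eig_iff N n p z e
  rw [hset, Set.ncard_coe_finset]
  -- compute the trace
  rw [Matrix.trace]
  have entry : ∀ g : Fin n → Fin 2,
      ((Matrix.diagonal fun e => if XP N n p 0 z e e = 1 then (1 : ℂ) else 0) *
          ((1 / c) •
            ∑ i : Fin K, Matrix.vecMulVec
              (∑ e ∈ E i, (omN N) ^ (φ i e) • (Pi.single e 1 : (Fin n → Fin 2) → ℂ))
              (star (∑ e ∈ E i, (omN N) ^ (φ i e) • (Pi.single e 1 : (Fin n → Fin 2) → ℂ)))) *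
          (Matrix.diagonal fun e => if XP N n p 0 z e e = 1 then (1 : ℂ) else 0)) g g =
      (1 / c) * (if g ∈ B ∧ XP N n p 0 z g g = 1 then 1 else 0) := by
    intro g
    rw [Matrix.mul_diagonal, Matrix.diagonal_mul, Matrix.smul_apply, Matrix.sum_apply]
    have hterm : ∀ i : Fin K,
        Matrix.vecMulVec
          (∑ e ∈ E i, (omN N) ^ (φ i e) • (Pi.single e 1 : (Fin n → Fin 2) → ℂ))
          (star (∑ e ∈ E i, (omN N) ^ (φ i e) • (Pi.single e 1 : (Fin n → Fin 2) → ℂ))) g g =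
        if g ∈ E i then 1 else 0 := by
      intro i
      rw [Matrix.vecMulVec_apply, Pi.star_apply, kappa_apply]
      split_ifs with h
      · exact omN_zpow_mul_conj N _
      · simp
    rw [Finset.sum_congr rfl fun i _ => hterm i]
    have hsum : (∑ i : Fin K, if g ∈ E i then (1 : ℂ) else 0) =
        if g ∈ B then 1 else 0 := by
      by_cases hg : g ∈ B
      · rw [if_pos hg]
        obtain ⟨i, -, hi⟩ := Finset.mem_biUnion.mp hg
        rw [Finset.sum_eq_single i]
        · rw [if_pos hi]
        · intro j _ hj
          rw [if_neg fun hgj => (Finset.disjoint_left.mp (hdisj j i hj)) hgj hi]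
        · intro h; exact absurd (Finset.mem_univ i) h
      · rw [if_neg hg]
        refine Finset.sum_eq_zero fun i _ => ?_
        rw [if_neg fun hgi => hg (Finset.mem_biUnion.mpr ⟨i, Finset.mem_univ i, hgi⟩)]
    rw [hsum]
    by_cases h1 : XP N n p 0 z g g = 1 <;> by_cases h2 : g ∈ B <;>
      simp [h1, h2, smul_eq_mul] <;> ring
  rw [Finset.sum_congr rfl fun g _ => (Matrix.diag_apply _ g).trans (entry g)]
  rw [← Finset.mul_sum]
  have : (∑ g : Fin n → Fin 2, if g ∈ B ∧ XP N n p 0 z g g = 1 then (1 : ℂ) else 0) =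
      ((B.filter fun e => XP N n p 0 z e e = 1).card : ℂ) := by
    rw [Finset.sum_boole]
    congr 1
    congr 1
    ext e
    simp [Finset.mem_filter]
  rw [this]
  ring
end

section
/- Let x₀, …, x_{r−1} : Fin n → ℤ be binary vectors (every entry 0 or 1), and let s : Fin n → ℤ be the unique binary vector congruent to ∑_{i<r} x_i modulo 2 componentwise. Then, with all operations componentwise in ℤ, s = ∑ over nonempty subsets d of Finset.range r of (−2)^(d.card − 1) • ∏_{i ∈ d} x_i. -/
/-- **Inclusion–exclusion formula for the mod-2 sum of binary vectors**: if `s` is the binary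
vector congruent componentwise mod 2 to `∑_i x_i`, then
`s = ∑_{∅ ≠ d ⊆ [r]} (−2)^(|d|−1) ∏_{i ∈ d} x_i`, all operations componentwise in `ℤ`. -/
theorem binary_mod_two_sum (n r : ℕ) (x : Fin r → Fin n → ℤ)
    (hx : ∀ i j, x i j = 0 ∨ x i j = 1)
    (s : Fin n → ℤ) (hs : ∀ j, s j = 0 ∨ s j = 1)
    (hcong : ∀ j, ((s j : ZMod 2)) = ∑ i, ((x i j : ZMod 2))) :
    s = ∑ d ∈ Finset.univ.powerset.filter (fun d : Finset (Fin r) => d.Nonempty),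
          (-2 : ℤ) ^ (d.card - 1) • ∏ i ∈ d, x i := by
  funext j
  simp only [Finset.sum_apply, Pi.smul_apply, Finset.prod_apply, smul_eq_mul]
  set S : Finset (Fin r) := Finset.univ.filter (fun i => x i j = 1) with hS
  -- the product is an indicator of d ⊆ S
  have hprod : ∀ d : Finset (Fin r), (∏ i ∈ d, x i j) = if d ⊆ S then 1 else 0 := by
    intro d
    split_ifs with h
    · apply Finset.prod_eq_one
      intro i hi
      have := h hi
      simpa [hS] using this
    · rw [Finset.not_subset] at h
      obtain ⟨i, hi, his⟩ := h
      apply Finset.prod_eq_zero hi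
      rcases hx i j with h0 | h1
      · exact h0
      · exact absurd (by simp [hS, h1]) his
  -- s j is determined by parity of S.card
  have hcast : ∀ i, ((x i j : ZMod 2)) = if i ∈ S then 1 else 0 := by
    intro i
    rcases hx i j with h0 | h1
    · simp [hS, h0]
    · simp [hS, h1]
  have hcardcast : (s j : ZMod 2) = (S.card : ZMod 2) := by
    rw [hcong j]
    simp only [hcast]
    rw [Finset.sum_ite_mem, Finset.univ_inter]
    simp
  have key : s j = if Even S.card then 0 else 1 := by
    rcases hs j with h0 | h1
    · rw [h0] at hcardcast ⊢
      have hz : ((S.card : ℕ) : ZMod 2) = 0 := by rw [← hcardcast]; norm_num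
      have hdvd : (2 : ℕ) ∣ S.card := (ZMod.natCast_eq_zero_iff _ _).mp hz
      obtain ⟨k, hk⟩ := hdvd
      have hev : Even S.card := ⟨k, by omega⟩
      simp [hev]
    · rw [h1] at hcardcast ⊢
      have hnz : ¬ (2 : ℕ) ∣ S.card := by
        intro hdvd
        rw [(ZMod.natCast_eq_zero_iff _ _).mpr hdvd] at hcardcast
        norm_num at hcardcast
      rw [if_neg (fun he => hnz he.two_dvd)]
  -- restrict the sum to subsets of S
  have hstep : ∑ d ∈ Finset.univ.powerset.filter (fun d : Finset (Fin r) => d.Nonempty),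
      (-2 : ℤ) ^ (d.card - 1) * ∏ i ∈ d, x i j
      = ∑ d ∈ S.powerset.filter (fun d => d.Nonempty), (-2 : ℤ) ^ (d.card - 1) := by
    simp only [hprod, mul_ite, mul_one, mul_zero]
    rw [← Finset.sum_filter]
    apply Finset.sum_congr _ (fun _ _ => rfl)
    ext d
    simp only [Finset.mem_filter, Finset.mem_powerset, Finset.subset_univ, true_and]
    rw [and_comm]
  rw [hstep, key]
  set T : ℤ := ∑ d ∈ S.powerset.filter (fun d => d.Nonempty), (-2 : ℤ) ^ (d.card - 1) with hT
  have h2T : (-2 : ℤ) * T = (-1 : ℤ) ^ S.card - 1 := by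
    rw [hT, Finset.mul_sum]
    have : ∀ d ∈ S.powerset.filter (fun d => d.Nonempty),
        (-2 : ℤ) * (-2) ^ (d.card - 1) = (-2 : ℤ) ^ d.card := by
      intro d hd
      have hne : d.Nonempty := (Finset.mem_filter.mp hd).2
      have hc : d.card - 1 + 1 = d.card := Nat.sub_add_cancel (Finset.card_pos.mpr hne)
      rw [← pow_succ', hc]
    rw [Finset.sum_congr rfl this]
    have hsplit : ∑ d ∈ S.powerset.filter (fun d => d.Nonempty), (-2 : ℤ) ^ d.card
        + ∑ d ∈ S.powerset.filter (fun d => ¬ d.Nonempty), (-2 : ℤ) ^ d.card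
        = ∑ d ∈ S.powerset, (-2 : ℤ) ^ d.card :=
      Finset.sum_filter_add_sum_filter_not _ _ _
    have hempty : S.powerset.filter (fun d => ¬ d.Nonempty) = {∅} := by
      ext d
      simp only [Finset.mem_filter, Finset.mem_powerset, Finset.not_nonempty_iff_eq_empty,
        Finset.mem_singleton, and_iff_right_iff_imp]
      rintro rfl
      exact Finset.empty_subset _
    have hall : ∑ d ∈ S.powerset, (-2 : ℤ) ^ d.card = (-1 : ℤ) ^ S.card := by
      have := Finset.prod_add (fun _ : Fin r => (-2 : ℤ)) (fun _ => (1 : ℤ)) S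
      simp only [Finset.prod_const, one_pow, mul_one] at this
      rw [← this]
      norm_num
    rw [hempty] at hsplit
    simp only [Finset.sum_singleton, Finset.card_empty, pow_zero] at hsplit
    omega
  have hne2 : (-2 : ℤ) ≠ 0 := by norm_num
  apply mul_left_cancel₀ hne2
  rw [h2T]
  rcases Nat.even_or_odd S.card with he | ho
  · rw [if_pos he, Even.neg_one_pow he]; ring
  · rw [if_neg (Nat.not_even_iff_odd.mpr ho), Odd.neg_one_pow ho]; ring
end

section
/- Let t ≥ 1 and N = 2^t, let r ≥ t and n ≥ 1, let E_q be a finite set of vectors in Fin n → ZMod 2, and let x₀, …, x_{r−1} : Fin n → ZMod 2. Let ι : (Fin n → ZMod 2) → (Fin n → ZMod N) be the componentwise map sending 0 to 0 and 1 to 1. Define E = { ι (q + ∑_i u i • x_i) : q ∈ E_q, u : Fin r → ZMod 2 } and E_t = { ι (q + ∑_i u i • x_i) : q ∈ E_q, u : Fin r → ZMod 2 with at most t nonzero entries }. Then Submodule.span (ZMod N) E = Submodule.span (ZMod N) E_t. -/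
/-!
For a bit `b`, the lift is `ι(b) = (1 - (-1)^b) / 2`, and `b ↦ (-1)^b` turns sums of bits into
products. Hence the alternating sum of `ι(q + ∑_{i ∈ T} xᵢ)` over the subsets `T ⊆ S` is, in each
coordinate, `∓ ½ ∏_{i ∈ S} ((-1)^{xᵢ} - 1)`, an integer divisible by `2^(|S|-1)`. When `|S| > t`
it therefore vanishes in `ZMod 2^t`, which writes `ι(q + ∑_{i ∈ S} xᵢ)` as an integer combination
of the lifts for the proper subsets of `S`; induction on `|S|` reduces every element of `E` to `E_t`.
-/

/-- The componentwise lift `(Fin n → ZMod 2) → (Fin n → ZMod N)` sending `0 ↦ 0, 1 ↦ 1`. -/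
def liftZ (n N : ℕ) (w : Fin n → ZMod 2) : Fin n → ZMod N := fun i => ((w i).val : ZMod N)

open Finset

theorem Finset.sum_powerset_neg_one_pow_card_sub_mul_prod {ι R : Type*} [CommRing R]
    (f : ι → R) (s : Finset ι) :
    ∑ t ∈ s.powerset, (-1) ^ (#s - #t) * ∏ i ∈ t, f i = ∏ i ∈ s, (f i - 1) := by
  classical
  simp_rw [sub_eq_add_neg, prod_add f (fun _ => (-1 : R)), prod_const]
  refine sum_congr rfl fun t ht => ?_
  rw [card_sdiff_of_subset (mem_powerset.mp ht), mul_comm]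

theorem ZMod.neg_one_pow_val_add_sum {ι : Type*} (c : ZMod 2) (a : ι → ZMod 2) (t : Finset ι) :
    (-1 : ℤ) ^ (c + ∑ i ∈ t, a i).val = (-1) ^ c.val * ∏ i ∈ t, (-1) ^ (a i).val := by
  have hcast : c + ∑ i ∈ t, a i = ((c.val + ∑ i ∈ t, (a i).val : ℕ) : ZMod 2) := by
    push_cast [ZMod.natCast_val, ZMod.cast_id', id]
    rfl
  rw [hcast, ZMod.val_natCast, ← neg_one_pow_eq_pow_mod_two, pow_add, prod_pow_eq_pow_sum]

theorem two_pow_dvd_sum_powerset_neg_one_pow_mul_val {ι : Type*} (c : ZMod 2) (a : ι → ZMod 2)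
    {s : Finset ι} (hs : s.Nonempty) :
    (2 : ℤ) ^ (#s - 1) ∣ ∑ t ∈ s.powerset, (-1) ^ (#s - #t) * ((c + ∑ i ∈ t, a i).val : ℤ) := by
  have two_mul_val : ∀ b : ZMod 2, 2 * (b.val : ℤ) = 1 - (-1) ^ b.val := by decide
  have two_dvd : ∀ b : ZMod 2, (2 : ℤ) ∣ (-1) ^ b.val - 1 := by decide
  have two_mul_sum : 2 * ∑ t ∈ s.powerset, (-1) ^ (#s - #t) * ((c + ∑ i ∈ t, a i).val : ℤ) =
      -((-1) ^ c.val * ∏ i ∈ s, ((-1) ^ (a i).val - 1)) := by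
    have hconst := sum_powerset_neg_one_pow_card_sub_mul_prod (fun _ => (1 : ℤ)) s
    have hchar := sum_powerset_neg_one_pow_card_sub_mul_prod (fun i => (-1 : ℤ) ^ (a i).val) s
    simp only [prod_const_one, mul_one, sub_self, prod_const, zero_pow hs.card_ne_zero] at hconst
    simp_rw [mul_sum, mul_left_comm (2 : ℤ), two_mul_val, ZMod.neg_one_pow_val_add_sum, mul_sub,
      sum_sub_distrib, mul_one, hconst, mul_left_comm _ ((-1 : ℤ) ^ c.val), ← mul_sum, hchar,
      zero_sub]
  have hprod : (2 : ℤ) ^ #s ∣ ∏ i ∈ s, ((-1) ^ (a i).val - 1) := by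
    rw [← prod_const]
    exact prod_dvd_prod_of_dvd _ _ fun i _ => two_dvd (a i)
  rw [← mul_dvd_mul_iff_left (two_ne_zero' ℤ), ← pow_succ', Nat.sub_add_cancel hs.card_pos,
    two_mul_sum, dvd_neg]
  exact hprod.mul_left _

theorem liftZ_sum_powerset_neg_one_pow_smul_eq_zero {ι : Type*} {n N : ℕ}
    (q : Fin n → ZMod 2) (x : ι → Fin n → ZMod 2) {s : Finset ι} (hs : s.Nonempty)
    (hN : N ∣ 2 ^ (#s - 1)) :
    ∑ t ∈ s.powerset, (-1 : ℤ) ^ (#s - #t) • liftZ n N (q + ∑ i ∈ t, x i) = 0 := by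
  funext j
  have hdvd := (Int.natCast_dvd_natCast.mpr hN).trans
    (two_pow_dvd_sum_powerset_neg_one_pow_mul_val (q j) (fun i => x i j) hs)
  rw [← ZMod.intCast_zmod_eq_zero_iff_dvd] at hdvd
  simpa [liftZ, zsmul_eq_mul, Finset.sum_apply] using hdvd

theorem liftZ_add_sum_mem_of_forall_card_le {ι : Type*} [DecidableEq ι] {n N t : ℕ}
    (hN : N ∣ 2 ^ t) {M : AddSubgroup (Fin n → ZMod N)} (q : Fin n → ZMod 2)
    (x : ι → Fin n → ZMod 2) (hM : ∀ s : Finset ι, #s ≤ t → liftZ n N (q + ∑ i ∈ s, x i) ∈ M)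
    (s : Finset ι) : liftZ n N (q + ∑ i ∈ s, x i) ∈ M := by
  induction s using Finset.strongInduction with
  | H s ih =>
  by_cases hs : #s ≤ t
  · exact hM s hs
  have hne : s.Nonempty := card_pos.mp (by omega)
  have hzero := liftZ_sum_powerset_neg_one_pow_smul_eq_zero q x hne
    (hN.trans (pow_dvd_pow 2 (by omega)))
  rw [← sum_erase_add _ _ (mem_powerset_self s), Nat.sub_self, pow_zero, one_smul] at hzero
  rw [eq_neg_of_add_eq_zero_right hzero]
  exact neg_mem (sum_mem fun u hu => zsmul_mem (ih u (mem_ssubsets.mp hu)) _)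

theorem ZMod.sum_smul_eq_sum_filter_ne_zero {ι M : Type*} [AddCommMonoid M] [Module (ZMod 2) M]
    (s : Finset ι) (u : ι → ZMod 2) (x : ι → M) :
    ∑ i ∈ s, u i • x i = ∑ i ∈ s with u i ≠ 0, x i := by
  rw [sum_filter]
  refine sum_congr rfl fun i _ => ?_
  obtain h | h : u i = 0 ∨ u i = 1 := by generalize u i = b; decide +revert
  · simp [h]
  · simp [h]

theorem span_eq_span_orbit_dist_le_general (t r n N : ℕ) (hN : N = 2 ^ t)
    (Eq : Finset (Fin n → ZMod 2)) (x : Fin r → Fin n → ZMod 2) :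
    Submodule.span (ZMod N)
        {w : Fin n → ZMod N | ∃ q ∈ Eq, ∃ u : Fin r → ZMod 2,
          w = liftZ n N (q + ∑ i, u i • x i)} =
      Submodule.span (ZMod N)
        {w : Fin n → ZMod N | ∃ q ∈ Eq, ∃ u : Fin r → ZMod 2,
          (Finset.univ.filter fun i => u i ≠ 0).card ≤ t ∧
          w = liftZ n N (q + ∑ i, u i • x i)} := by
  refine le_antisymm (Submodule.span_le.mpr ?_) (Submodule.span_mono ?_)
  · rintro w ⟨q, hq, u, rfl⟩
    rw [ZMod.sum_smul_eq_sum_filter_ne_zero]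
    refine liftZ_add_sum_mem_of_forall_card_le (M := (Submodule.span _ _).toAddSubgroup)
      (dvd_of_eq hN) q x (fun s hs => Submodule.subset_span ?_) _
    refine ⟨q, hq, fun i => if i ∈ s then 1 else 0, by simpa using hs, ?_⟩
    simp
  · rintro w ⟨q, hq, u, -, hw⟩
    exact ⟨q, hq, u, hw⟩

/-- **Span reduction to small orbit distance**: for `N = 2^t`, the `ZMod N`-span of the lifted
coset `E = { ι(q + ∑_i u_i x_i) }` equals the span of the subset `E_t` of elements of orbit
distance at most `t` from the core `E_q`. -/
theorem span_eq_span_orbit_dist_le (t r n N : ℕ) (ht : 1 ≤ t) (hN : N = 2 ^ t) (hr : t ≤ r)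
    (hn : 1 ≤ n)
    (Eq : Finset (Fin n → ZMod 2)) (x : Fin r → Fin n → ZMod 2) :
    Submodule.span (ZMod N)
        {w : Fin n → ZMod N | ∃ q ∈ Eq, ∃ u : Fin r → ZMod 2,
          w = liftZ n N (q + ∑ i, u i • x i)} =
      Submodule.span (ZMod N)
        {w : Fin n → ZMod N | ∃ q ∈ Eq, ∃ u : Fin r → ZMod 2,
          (Finset.univ.filter fun i => u i ≠ 0).card ≤ t ∧
          w = liftZ n N (q + ∑ i, u i • x i)} :=
  span_eq_span_orbit_dist_le_general t r n N hN Eq x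
end

section
/- Fix r ≥ 2 and index coordinates by the nonzero vectors u : Fin r → ZMod 2, u ≠ 0 (there are 2^r − 1 of them). For k : Fin r define x_k : {u // u ≠ 0} → ℤ by x_k(u) = (u k).val ∈ {0,1}, let 𝟙 be the all-ones vector, and for every subset c ⊆ Fin r let s_c be the binary vector congruent componentwise modulo 2 to ∑_{j ∈ c} x_j. Then, with v · w = ∑_u v(u) * w(u) in ℤ: (i) x_k · 𝟙 = 2^(r−1) for every k; (ii) 2^(r−2) divides x_k · s_c for every k and every c; and (iii) 2^(r−1) divides 𝟙 · s_c for every c. (These congruences show that the Reed–Muller code on 2^r − 1 qubits is the codespace of a precision-2^(r−2) XP code whose stabiliser generators are symmetric in X and P, and that it admits the transversal logical phase operator diag(1, exp(−2πi/2^(r−1))).) -/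
/-- The coordinate index set: nonzero vectors `u : Fin r → ZMod 2` (so `2^r − 1` coordinates). -/
def NZ (r : ℕ) : Type := {u : Fin r → ZMod 2 // u ≠ 0}

instance (r : ℕ) : Fintype (NZ r) := Subtype.fintype _

/-- The integer row vector `x_k(u) = (u k).val ∈ {0,1}`. -/
def xRow (r : ℕ) (k : Fin r) : NZ r → ℤ := fun u => ((u.1 k).val : ℤ)

/-- The binary vector congruent mod 2 componentwise to `∑_{j ∈ c} x_j`. -/
def sVec (r : ℕ) (c : Finset (Fin r)) : NZ r → ℤ := fun u => (∑ j ∈ c, xRow r j u) % 2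

namespace RMaux

/-- The sign character `(-1)^a`. -/
def eps (a : ZMod 2) : ℤ := 1 - 2 * (a.val : ℤ)

lemma eps_add_one : ∀ a : ZMod 2, eps (a + 1) = - eps a := by decide

lemma cast_val : ∀ a : ZMod 2, (((a.val : ℤ)) : ZMod 2) = a := by decide

lemma two_mul_val : ∀ a : ZMod 2, 2 * (a.val : ℤ) = 1 - eps a := by decide

lemma four_mul_val : ∀ a b : ZMod 2,
    4 * ((a.val : ℤ) * (b.val : ℤ)) = 1 - eps a - eps b + eps (a + b) := by decide

lemma eps_zero : eps 0 = 1 := by decide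

lemma card_G (r : ℕ) : Fintype.card (Fin r → ZMod 2) = 2 ^ r := by
  simp

lemma sum_one (r : ℕ) : ∑ _u : Fin r → ZMod 2, (1 : ℤ) = 2 ^ r := by
  simp [card_G]

lemma sum_eps_zero (r : ℕ) (j : Fin r) (f : (Fin r → ZMod 2) → ZMod 2)
    (hf : ∀ u, f (u + Pi.single j 1) = f u + 1) :
    ∑ u : Fin r → ZMod 2, eps (f u) = 0 := by
  have h : ∑ u : Fin r → ZMod 2, eps (f (u + Pi.single j 1))
      = ∑ u : Fin r → ZMod 2, eps (f u) :=
    Fintype.sum_equiv (Equiv.addRight (Pi.single j 1)) _ _ (fun u => rfl)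
  simp_rw [hf, eps_add_one, Finset.sum_neg_distrib] at h
  linarith

lemma sum_eps_L (r : ℕ) (c : Finset (Fin r)) (hc : c.Nonempty) :
    ∑ u : Fin r → ZMod 2, eps (∑ j ∈ c, u j) = 0 := by
  obtain ⟨j, hj⟩ := hc
  apply sum_eps_zero r j
  intro u
  have h1 : ∑ i ∈ c, (Pi.single j (1 : ZMod 2)) i = 1 := by
    rw [Finset.sum_eq_single_of_mem j hj]
    · simp
    · intro b _ hb; exact Pi.single_eq_of_ne hb 1
  simp [Finset.sum_add_distrib, h1]

lemma sum_eps_empty (r : ℕ) :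
    ∑ u : Fin r → ZMod 2, eps (∑ j ∈ (∅ : Finset (Fin r)), u j) = 2 ^ r := by
  simp [eps_zero, card_G]

lemma sum_eps (r : ℕ) (c : Finset (Fin r)) :
    ∑ u : Fin r → ZMod 2, eps (∑ j ∈ c, u j) = if c = ∅ then 2 ^ r else 0 := by
  rcases c.eq_empty_or_nonempty with h | h
  · subst h
    rw [if_pos rfl, ← sum_one r]
    exact Finset.sum_congr rfl fun u _ => by simp [eps_zero]
  · rw [if_neg h.ne_empty]; exact sum_eps_L r c h

lemma sum_val_L (r : ℕ) (hr : 1 ≤ r) (c : Finset (Fin r)) (hc : c.Nonempty) :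
    ∑ u : Fin r → ZMod 2, ((∑ j ∈ c, u j).val : ℤ) = 2 ^ (r - 1) := by
  obtain ⟨s, rfl⟩ : ∃ s, r = s + 1 := ⟨r - 1, by omega⟩
  have h2 : 2 * ∑ u : Fin (s + 1) → ZMod 2, ((∑ j ∈ c, u j).val : ℤ) = 2 ^ (s + 1) := by
    rw [Finset.mul_sum]
    simp_rw [two_mul_val _]
    rw [Finset.sum_sub_distrib, sum_one, sum_eps_L _ c hc, sub_zero]
  have hpow : (2 : ℤ) ^ (s + 1) = 2 * 2 ^ s := by rw [pow_succ]; ring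
  rw [hpow] at h2
  simpa using mul_left_cancel₀ two_ne_zero h2

lemma of_four_mul (r : ℕ) (hr : 2 ≤ r) (T m : ℤ) (h : 4 * T = 2 ^ r * m) :
    (2 ^ (r - 2) : ℤ) ∣ T := by
  obtain ⟨s, rfl⟩ : ∃ s, r = s + 2 := ⟨r - 2, by omega⟩
  have hpow : (2 : ℤ) ^ (s + 2) = 4 * 2 ^ s := by rw [pow_add]; ring
  refine ⟨m, ?_⟩
  have h4 : 4 * T = 4 * (2 ^ s * m) := by rw [h, hpow]; ring
  have : T = 2 ^ s * m := by linarith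
  simpa using this

lemma sum_val_mul (r : ℕ) (hr : 2 ≤ r) (k : Fin r) (c : Finset (Fin r)) :
    (2 ^ (r - 2) : ℤ) ∣
      ∑ u : Fin r → ZMod 2, ((u k).val : ℤ) * ((∑ j ∈ c, u j).val : ℤ) := by
  set T := ∑ u : Fin r → ZMod 2, ((u k).val : ℤ) * ((∑ j ∈ c, u j).val : ℤ) with hT
  have hk : ∑ u : Fin r → ZMod 2, eps (u k) = 0 := by
    have := sum_eps_L r {k} ⟨k, Finset.mem_singleton_self k⟩
    simpa using this
  have h4 : 4 * T = ∑ u : Fin r → ZMod 2,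
      (1 - eps (u k) - eps (∑ j ∈ c, u j) + eps (u k + ∑ j ∈ c, u j)) := by
    rw [hT, Finset.mul_sum]
    exact Finset.sum_congr rfl fun u _ => four_mul_val _ _
  rw [Finset.sum_add_distrib, Finset.sum_sub_distrib, Finset.sum_sub_distrib,
    sum_one, hk, sub_zero, sum_eps] at h4
  by_cases hkc : k ∈ c
  · have hcross : ∀ u : Fin r → ZMod 2,
        u k + ∑ j ∈ c, u j = ∑ j ∈ c.erase k, u j := by
      intro u
      rw [← Finset.add_sum_erase c _ hkc, ← add_assoc]
      have : u k + u k = 0 := by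
        generalize u k = a; revert a; decide
      rw [this, zero_add]
    simp_rw [hcross] at h4
    rw [sum_eps] at h4
    rw [if_neg (Finset.ne_empty_of_mem hkc)] at h4
    by_cases he : c.erase k = ∅
    · rw [if_pos he] at h4
      exact of_four_mul r hr T 2 (by linarith)
    · rw [if_neg he] at h4
      exact of_four_mul r hr T 1 (by linarith)
  · have hcross : ∀ u : Fin r → ZMod 2,
        u k + ∑ j ∈ c, u j = ∑ j ∈ insert k c, u j := by
      intro u; rw [Finset.sum_insert hkc]
    simp_rw [hcross] at h4
    rw [sum_eps, if_neg (Finset.insert_nonempty k c).ne_empty] at h4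
    by_cases hce : c = ∅
    · rw [if_pos hce] at h4
      exact of_four_mul r hr T 0 (by linarith)
    · rw [if_neg hce] at h4
      exact of_four_mul r hr T 1 (by linarith)

lemma mod2_val (n : ℤ) : n % 2 = (((n : ZMod 2)).val : ℤ) := by
  have h : ((n % 2 : ℤ) : ZMod 2) = (n : ZMod 2) := by
    rw [ZMod.intCast_eq_intCast_iff]
    exact Int.emod_emod_of_dvd n dvd_rfl
  rw [← h]
  have h2 : n % 2 = 0 ∨ n % 2 = 1 := Int.emod_two_eq_zero_or_one n
  rcases h2 with h2 | h2 <;> rw [h2] <;> decide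

lemma sVec_eq (r : ℕ) (c : Finset (Fin r)) (u : NZ r) :
    sVec r c u = (((∑ j ∈ c, u.1 j : ZMod 2)).val : ℤ) := by
  unfold sVec xRow
  rw [mod2_val]
  congr 2
  push_cast
  exact Finset.sum_congr rfl fun j _ => cast_val _

lemma sum_nz (r : ℕ) (f : (Fin r → ZMod 2) → ℤ) (hf : f 0 = 0) :
    ∑ u : NZ r, f u.1 = ∑ u : Fin r → ZMod 2, f u := by
  classical
  have h1 : ∑ u : NZ r, f u.1
      = ∑ x ∈ Finset.univ.filter (fun u : Fin r → ZMod 2 => u ≠ 0), f x := by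
    exact (Finset.sum_subtype _ (fun x => by simp) f).symm
  rw [h1]
  apply Finset.sum_filter_of_ne
  intro x _ hx
  intro h0
  exact hx (h0 ▸ hf)

end RMaux

open RMaux in
/-- **Reed–Muller congruences**: with coordinates indexed by nonzero `u : Fin r → ZMod 2`,
rows `x_k(u) = u k` and mod-2 row sums `s_c`: (i) `x_k · 𝟙 = 2^(r−1)`;
(ii) `2^(r−2) ∣ x_k · s_c`; (iii) `2^(r−1) ∣ 𝟙 · s_c`.  These show the Reed–Muller code on
`2^r − 1` qubits is the codespace of a precision-`2^(r−2)` XP code with stabiliser generators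
symmetric in X and P, admitting the transversal logical operator
`diag(1, exp(−2πi/2^(r−1)))`. -/
theorem reed_muller_congruences (r : ℕ) (hr : 2 ≤ r) :
    (∀ k : Fin r, ∑ u : NZ r, xRow r k u * 1 = 2 ^ (r - 1)) ∧
      (∀ k : Fin r, ∀ c : Finset (Fin r),
        (2 ^ (r - 2) : ℤ) ∣ ∑ u : NZ r, xRow r k u * sVec r c u) ∧
      ∀ c : Finset (Fin r), (2 ^ (r - 1) : ℤ) ∣ ∑ u : NZ r, 1 * sVec r c u := by
  refine ⟨?_, ?_, ?_⟩
  · intro k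
    have h : ∑ u : NZ r, xRow r k u * 1
        = ∑ u : Fin r → ZMod 2, ((u k).val : ℤ) := by
      simp_rw [mul_one]
      exact sum_nz r (fun u => ((u k).val : ℤ)) (by simp)
    rw [h]
    have := sum_val_L r (le_trans one_le_two hr) {k} ⟨k, Finset.mem_singleton_self k⟩
    simpa using this
  · intro k c
    have h : ∑ u : NZ r, xRow r k u * sVec r c u
        = ∑ u : Fin r → ZMod 2, ((u k).val : ℤ) * ((∑ j ∈ c, u j).val : ℤ) := by
      simp_rw [sVec_eq]
      exact sum_nz r (fun u => ((u k).val : ℤ) * ((∑ j ∈ c, u j).val : ℤ)) (by simp)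
    rw [h]
    exact sum_val_mul r hr k c
  · intro c
    have h : ∑ u : NZ r, 1 * sVec r c u
        = ∑ u : Fin r → ZMod 2, ((∑ j ∈ c, u j).val : ℤ) := by
      simp_rw [sVec_eq, one_mul]
      exact sum_nz r (fun u => ((∑ j ∈ c, u j).val : ℤ)) (by simp)
    rw [h]
    rcases c.eq_empty_or_nonempty with hce | hce
    · subst hce; simp
    · rw [sum_val_L r (le_trans one_le_two hr) c hce]
end
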